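/- arXiv:2212.10859 — 3 statements merged into one kernel-verified Lean document; each statement's English description precedes it below -/
import Mathlib

section
/- Let n ≥ 1 and q ≥ 1 be integers, let L_i > 0 and α_i ∈ (0, 2/(L_i+1)) for i = 1,…,n, and set β = 1/(2(n+1)). Then for every (x, y₁,…,y_n) ∈ ℝ^q × (ℝ^q)^n with (x, y) ≠ 0, one has ‖x‖² + Σ_{i=1}^n (1/α_i − L_i/2)‖y_i‖² − β Σ_{i=1}^n ‖x − y_i‖² > 0. -/
/-- Assumption 2 of the paper: the uncoordinated network-independent stepsize
condition `α i ∈ (0, 2/(L i + 1))` with `β = 1/(2(n+1))` guarantees the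
positivity of the quadratic form in inequality (7). -/
theorem stepsize_quadratic_form_pos
    (n q : ℕ) (hn : 1 ≤ n) (hq : 1 ≤ q)
    (L α : Fin n → ℝ) (hL : ∀ i, 0 < L i)
    (hα : ∀ i, 0 < α i ∧ α i < 2 / (L i + 1))
    (x : EuclideanSpace ℝ (Fin q)) (y : Fin n → EuclideanSpace ℝ (Fin q))
    (hne : (x, y) ≠ 0) :
    0 < ‖x‖^2 + ∑ i, (1/α i - L i/2) * ‖y i‖^2
      - (1/(2 * ((n : ℝ) + 1))) * ∑ i, ‖x - y i‖^2 := by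
  have hn1 : (1:ℝ) ≤ (n:ℝ) := by exact_mod_cast hn
  have hn0 : (0:ℝ) < (n:ℝ) + 1 := by linarith
  have hβpos : (0:ℝ) < 1/(2 * ((n : ℝ) + 1)) := by positivity
  -- each coefficient exceeds 1/2
  have hc : ∀ i, 1/2 < 1/α i - L i/2 := by
    intro i
    obtain ⟨h0, h2⟩ := hα i
    have hL1 : 0 < L i + 1 := by linarith [hL i]
    have h2' : α i * (L i + 1) < 2 := by
      rw [lt_div_iff₀ hL1] at h2; linarith
    have hinv : 1 / α i * α i = 1 := by field_simp
    nlinarith [mul_pos h0 hL1]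
  -- pointwise bound on cross terms
  have hbound : ∀ i, ‖x - y i‖^2 ≤ 2*‖x‖^2 + 2*‖y i‖^2 := by
    intro i
    have h := norm_sub_le x (y i)
    have h2 : ‖x - y i‖^2 ≤ (‖x‖ + ‖y i‖)^2 :=
      pow_le_pow_left₀ (norm_nonneg _) h 2
    nlinarith [sq_nonneg (‖x‖ - ‖y i‖)]
  have hS : ∑ i, ‖x - y i‖^2 ≤ 2*(n:ℝ)*‖x‖^2 + 2*∑ i, ‖y i‖^2 := by
    calc ∑ i, ‖x - y i‖^2 ≤ ∑ i : Fin n, (2*‖x‖^2 + 2*‖y i‖^2) :=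
          Finset.sum_le_sum fun i _ => hbound i
      _ = 2*(n:ℝ)*‖x‖^2 + 2*∑ i, ‖y i‖^2 := by
          rw [Finset.sum_add_distrib, Finset.sum_const, ← Finset.mul_sum]
          simp [Finset.card_univ]; ring
  -- the key lower bound
  have key : (1/((n:ℝ)+1))*‖x‖^2 + ∑ i, (1/α i - L i/2 - 1/2)*‖y i‖^2
      ≤ ‖x‖^2 + ∑ i, (1/α i - L i/2) * ‖y i‖^2
        - (1/(2 * ((n : ℝ) + 1))) * ∑ i, ‖x - y i‖^2 := by
    have h1 : (1/(2 * ((n : ℝ) + 1))) * ∑ i, ‖x - y i‖^2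
        ≤ (1/(2 * ((n : ℝ) + 1))) * (2*(n:ℝ)*‖x‖^2 + 2*∑ i, ‖y i‖^2) :=
      mul_le_mul_of_nonneg_left hS hβpos.le
    have heq : (1/(2 * ((n : ℝ) + 1))) * (2*(n:ℝ)*‖x‖^2 + 2*∑ i, ‖y i‖^2)
        = ((n:ℝ)/((n:ℝ)+1))*‖x‖^2 + (1/((n:ℝ)+1))*∑ i, ‖y i‖^2 := by
      field_simp
    have h2 : ∑ i, (1/α i - L i/2 - 1/2)*‖y i‖^2 + (1/((n:ℝ)+1)) * ∑ i, ‖y i‖^2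
        ≤ ∑ i, (1/α i - L i/2) * ‖y i‖^2 := by
      rw [Finset.mul_sum, ← Finset.sum_add_distrib]
      apply Finset.sum_le_sum
      intro i _
      have h12 : 1/((n:ℝ)+1) ≤ 1/2 := by
        apply one_div_le_one_div_of_le <;> linarith
      nlinarith [sq_nonneg ‖y i‖]
    have hsplit : 1 - (n:ℝ)/((n:ℝ)+1) = 1/((n:ℝ)+1) := by
      field_simp; ring
    have hX : ((n:ℝ)/((n:ℝ)+1))*‖x‖^2 = ‖x‖^2 - (1/((n:ℝ)+1))*‖x‖^2 := by
      field_simp; ring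
    rw [heq] at h1
    linarith
  -- positivity of the lower bound
  have hnn : ∀ i ∈ Finset.univ, (0:ℝ) ≤ (1/α i - L i/2 - 1/2)*‖y i‖^2 := by
    intro i _
    have := hc i
    have := sq_nonneg ‖y i‖
    nlinarith
  have hsum_nn : (0:ℝ) ≤ ∑ i, (1/α i - L i/2 - 1/2)*‖y i‖^2 :=
    Finset.sum_nonneg hnn
  have hpos : 0 < (1/((n:ℝ)+1))*‖x‖^2 + ∑ i, (1/α i - L i/2 - 1/2)*‖y i‖^2 := by
    have hcases : x ≠ 0 ∨ y ≠ 0 := by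
      by_contra h
      push_neg at h
      exact hne (by simp [Prod.ext_iff, h.1, h.2])
    rcases hcases with hx | hy
    · have hx' : 0 < ‖x‖ := norm_pos_iff.mpr hx
      have : 0 < (1/((n:ℝ)+1))*‖x‖^2 := by positivity
      linarith
    · obtain ⟨j, hj⟩ := Function.ne_iff.mp hy
      have hj' : 0 < ‖y j‖ := by simpa [norm_pos_iff] using hj
      have hsum_pos : 0 < ∑ i, (1/α i - L i/2 - 1/2)*‖y i‖^2 := by
        apply Finset.sum_pos' hnn
        refine ⟨j, Finset.mem_univ j, ?_⟩
        exact mul_pos (by linarith [hc j]) (pow_pos hj' 2)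
      have hx2 : 0 ≤ (1/((n:ℝ)+1))*‖x‖^2 := by positivity
      linarith
  linarith
end

section
/- Let n ≥ 1 and q ≥ 1 be integers, let L_i > 0 and α_i ∈ (0, 2/(L_i+1)) for i = 1,…,n, and set β = 1/(2(n+1)). Then the quadratic form Q_{Ŝ}(λ,x,y) = (1/β)Σ_{i=1}^n‖λ_i‖² + ‖x‖² + Σ_{i=1}^n (1/α_i − L_i/2)‖y_i‖² + 2Σ_{i=1}^n⟨λ_i, y_i − x⟩ is positive definite: Q_{Ŝ}(λ,x,y) > 0 for every (λ,x,y) ∈ (ℝ^q)^n × ℝ^q × (ℝ^q)^n with (λ,x,y) ≠ 0. -/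
/-!
Since `1/β = 2(n+1)`, the form splits as a sum over `i` of two forms in the pairs `(λ_i, y_i)`
and `(λ_i, -x)`, each with weight `n+1` on `‖λ_i‖²`: the form of `[[n+1, 1], [1, 1/α_i - L_i/2]]`
and that of `[[n+1, 1], [1, 1/n]]` (the latter carrying a share `‖x‖²/n`). A form
`a‖u‖² + 2⟪u, v⟫ + c‖v‖²` is positive definite as soon as `a > 0` and `ac > 1`, and the
stepsize bound `α_i < 2/(L_i+1)` gives `1/α_i - L_i/2 > 1/2`, whence `(n+1)(1/α_i - L_i/2) > 1`.
-/

open RealInnerProductSpace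

section PairForm

variable {E : Type*} [NormedAddCommGroup E] [InnerProductSpace ℝ E]

/-- The quadratic form of the block matrix `[[a, 1], [1, c]]` on `E × E`. -/
def pairForm (a c : ℝ) (u v : E) : ℝ := a * ‖u‖ ^ 2 + 2 * ⟪u, v⟫ + c * ‖v‖ ^ 2

theorem mul_pairForm_eq (a c : ℝ) (u v : E) :
    a * pairForm a c u v = ‖a • u + v‖ ^ 2 + (a * c - 1) * ‖v‖ ^ 2 := by
  rw [pairForm, norm_add_sq_real, norm_smul, real_inner_smul_left, mul_pow,
    Real.norm_eq_abs, sq_abs]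
  ring

variable {a c : ℝ} (ha : 0 < a) (hac : 1 < a * c)
include ha hac

theorem pairForm_nonneg (u v : E) : 0 ≤ pairForm a c u v := by
  refine nonneg_of_mul_nonneg_right ?_ ha
  rw [mul_pairForm_eq]
  have := sub_pos.2 hac
  positivity

theorem pairForm_pos {u v : E} (huv : u ≠ 0 ∨ v ≠ 0) : 0 < pairForm a c u v := by
  refine pos_of_mul_pos_right ?_ ha.le
  rw [mul_pairForm_eq]
  by_cases hv : v = 0
  · have hu : u ≠ 0 := huv.resolve_right (not_not.2 hv)
    simp [hv, ha.ne', hu]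
  · have := sub_pos.2 hac
    have : 0 < ‖v‖ := norm_pos_iff.2 hv
    positivity

theorem pairForm_add_pairForm_pos {c' : ℝ} (hac' : 1 < a * c') {u v w : E}
    (huvw : u ≠ 0 ∨ v ≠ 0 ∨ w ≠ 0) : 0 < pairForm a c u v + pairForm a c' u w := by
  rcases huvw with hu | hv | hw
  · exact add_pos (pairForm_pos ha hac (.inl hu)) (pairForm_pos ha hac' (.inl hu))
  · exact add_pos_of_pos_of_nonneg (pairForm_pos ha hac (.inr hv)) (pairForm_nonneg ha hac' _ _)
  · exact add_pos_of_nonneg_of_pos (pairForm_nonneg ha hac _ _) (pairForm_pos ha hac' (.inr hw))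

end PairForm

theorem half_lt_inv_sub_half {α L : ℝ} (hα : 0 < α) (hαL : α < 2 / (L + 1)) :
    1 / 2 < 1 / α - L / 2 := by
  have hL : 0 < L + 1 := (div_pos_iff_of_pos_left two_pos).1 (hα.trans hαL)
  rw [lt_div_iff₀ hL] at hαL
  have : (L + 1) / 2 < 1 / α := by
    rw [lt_div_iff₀ hα]
    linarith
  linarith

theorem Shat_quadratic_form_posDef_general
    (n q : ℕ) (hn : 1 ≤ n)
    (L α : Fin n → ℝ)
    (hα : ∀ i, 0 < α i ∧ α i < 2 / (L i + 1))
    (β : ℝ) (hβ : β = 1/(2 * ((n : ℝ) + 1)))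
    (lam : Fin n → EuclideanSpace ℝ (Fin q))
    (x : EuclideanSpace ℝ (Fin q)) (y : Fin n → EuclideanSpace ℝ (Fin q))
    (hne : (lam, x, y) ≠ 0) :
    0 < (1/β) * ∑ i, ‖lam i‖^2 + ‖x‖^2 + ∑ i, (1/α i - L i/2) * ‖y i‖^2
      + 2 * ∑ i, ⟪lam i, y i - x⟫ := by
  have hn' : (1 : ℝ) ≤ n := by exact_mod_cast hn
  have hsplit : (1/β) * ∑ i, ‖lam i‖^2 + ‖x‖^2 + ∑ i, (1/α i - L i/2) * ‖y i‖^2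
      + 2 * ∑ i, ⟪lam i, y i - x⟫ = ∑ i, (pairForm (n + 1) (1/α i - L i/2) (lam i) (y i)
        + pairForm (n + 1) (1/n) (lam i) (-x)) := by
    have hx : ‖x‖ ^ 2 = ∑ _i : Fin n, 1 / (n : ℝ) * ‖x‖ ^ 2 := by
      rw [Finset.sum_const, Finset.card_univ, Fintype.card_fin, nsmul_eq_mul]
      field_simp
    rw [hβ, one_div_one_div, hx, Finset.mul_sum, Finset.mul_sum, ← Finset.sum_add_distrib,
      ← Finset.sum_add_distrib, ← Finset.sum_add_distrib]
    refine Finset.sum_congr rfl fun i _ => ?_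
    simp only [pairForm, norm_neg, inner_neg_right, inner_sub_right]
    ring
  have hpos : 0 < (n : ℝ) + 1 := by linarith
  have hy_coef (i : Fin n) : 1 < (n + 1) * (1/α i - L i/2) := by
    nlinarith [half_lt_inv_sub_half (hα i).1 (hα i).2]
  have hx_coef : 1 < ((n : ℝ) + 1) * (1/n) := by
    rw [mul_one_div, lt_div_iff₀ (by linarith)]
    linarith
  obtain ⟨i, hi⟩ : ∃ i, lam i ≠ 0 ∨ y i ≠ 0 ∨ -x ≠ 0 := by
    by_contra! h
    exact hne (Prod.ext (funext fun i => (h i).1)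
      (Prod.ext (neg_eq_zero.1 (h ⟨0, hn⟩).2.2) (funext fun i => (h i).2.1)))
  rw [hsplit]
  refine Finset.sum_pos' (fun j _ => add_nonneg (pairForm_nonneg hpos (hy_coef j) _ _)
    (pairForm_nonneg hpos hx_coef _ _)) ⟨i, Finset.mem_univ i, ?_⟩
  exact pairForm_add_pairForm_pos hpos (hy_coef i) hx_coef hi

/-- Positive definiteness of the quadratic form of the matrix `Ŝ` from
Proposition 1 of the paper, under Assumption 2. -/
theorem Shat_quadratic_form_posDef
    (n q : ℕ) (hn : 1 ≤ n) (hq : 1 ≤ q)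
    (L α : Fin n → ℝ) (hL : ∀ i, 0 < L i)
    (hα : ∀ i, 0 < α i ∧ α i < 2 / (L i + 1))
    (β : ℝ) (hβ : β = 1/(2 * ((n : ℝ) + 1)))
    (lam : Fin n → EuclideanSpace ℝ (Fin q))
    (x : EuclideanSpace ℝ (Fin q)) (y : Fin n → EuclideanSpace ℝ (Fin q))
    (hne : (lam, x, y) ≠ 0) :
    0 < (1/β) * ∑ i, ‖lam i‖^2 + ‖x‖^2 + ∑ i, (1/α i - L i/2) * ‖y i‖^2
      + 2 * ∑ i, ⟪lam i, y i - x⟫ :=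
  Shat_quadratic_form_posDef_general n q hn L α hα β hβ lam x y hne
end

section
/- Let q ∈ ℕ, α, β, L > 0, and let λ, x, y, u, x⁺ ∈ ℝ^q. Let g, ĝ : ℝ^q → ℝ^q be two maps (gradients of the local loss over two neighbouring datasets) satisfying ‖g(y)‖ ≤ L and ‖ĝ(y)‖ ≤ L. Define λ' = λ + β(x − y); y⁺ = y − α(g(y) − λ'); ŷ⁺ = y − α(ĝ(y) − λ'); λ⁺ = λ' + β[(x⁺ − x) − (y⁺ − y)]; λ̂⁺ = λ' + β[(x⁺ − x) − (ŷ⁺ − y)]; u⁺ = u + λ⁺ − λ; û⁺ = u + λ̂⁺ − λ. Then u⁺ − û⁺ = αβ(g(y) − ĝ(y)), and hence ‖u⁺ − û⁺‖ ≤ 2αβL ≤ 4αβL. -/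
/-!
Only the gradient step of the primal update sees the data, and every later update is affine
in the primal iterate with the same coefficients for both datasets. So the two gradient values
enter `u⁺ - û⁺` exactly once, scaled by `α` in the primal step and by `β` in the dual step, and the
bound is the triangle inequality `‖g(y) - ĝ(y)‖ ≤ 2L`.
-/

theorem recal_dual_update_sub {R E : Type*} [CommRing R] [AddCommGroup E] [Module R E]
    (α β : R) (lam lam' x y u xplus a b : E) :
    (u + (lam' + β • ((xplus - x) - (y - α • (a - lam') - y))) - lam) -
      (u + (lam' + β • ((xplus - x) - (y - α • (b - lam') - y))) - lam) =
      (α * β) • (a - b) := by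
  simp only [smul_sub, smul_smul, mul_comm α β]
  abel

theorem norm_smul_sub_le_of_norm_le {E : Type*} [SeminormedAddCommGroup E] [NormedSpace ℝ E]
    {c L : ℝ} (hc : 0 ≤ c) {a b : E} (ha : ‖a‖ ≤ L) (hb : ‖b‖ ≤ L) :
    ‖c • (a - b)‖ ≤ 2 * c * L := by
  rw [norm_smul_of_nonneg hc]
  calc c * ‖a - b‖ ≤ c * (L + L) := mul_le_mul_of_nonneg_left (norm_sub_le_of_le ha hb) hc
    _ = 2 * c * L := by ring

theorem dp_recal_sensitivity_general
    (q : ℕ) (α β L : ℝ) (hα : 0 < α) (hβ : 0 < β)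
    (lam x y u xplus : EuclideanSpace ℝ (Fin q))
    (g ghat : EuclideanSpace ℝ (Fin q) → EuclideanSpace ℝ (Fin q))
    (hg : ‖g y‖ ≤ L) (hghat : ‖ghat y‖ ≤ L)
    (lam' yplus yhatplus lamplus lamhatplus uplus uhatplus :
      EuclideanSpace ℝ (Fin q))
    (hyplus : yplus = y - α • (g y - lam'))
    (hyhatplus : yhatplus = y - α • (ghat y - lam'))
    (hlamplus : lamplus = lam' + β • ((xplus - x) - (yplus - y)))
    (hlamhatplus : lamhatplus = lam' + β • ((xplus - x) - (yhatplus - y)))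
    (huplus : uplus = u + lamplus - lam)
    (huhatplus : uhatplus = u + lamhatplus - lam) :
    uplus - uhatplus = (α * β) • (g y - ghat y) ∧
    ‖uplus - uhatplus‖ ≤ 2 * α * β * L ∧
    ‖uplus - uhatplus‖ ≤ 4 * α * β * L := by
  have hdiff : uplus - uhatplus = (α * β) • (g y - ghat y) := by
    subst huplus huhatplus hlamplus hlamhatplus hyplus hyhatplus
    exact recal_dual_update_sub α β lam lam' x y u xplus (g y) (ghat y)
  have hbound : ‖uplus - uhatplus‖ ≤ 2 * α * β * L := by
    rw [hdiff, mul_assoc 2 α β]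
    exact norm_smul_sub_le_of_norm_le (mul_pos hα hβ).le hg hghat
  have hbound_nonneg : 0 ≤ 2 * α * β * L := (norm_nonneg _).trans hbound
  exact ⟨hdiff, hbound, hbound.trans (by linarith)⟩

/-- Lemma 5 of the paper: the sensitivity of the transmitted variable `u` of
DP-RECAL with respect to changing one record of the active agent's local
dataset is bounded by `4αβL`. -/
theorem dp_recal_sensitivity
    (q : ℕ) (α β L : ℝ) (hα : 0 < α) (hβ : 0 < β) (hL : 0 < L)
    (lam x y u xplus : EuclideanSpace ℝ (Fin q))
    (g ghat : EuclideanSpace ℝ (Fin q) → EuclideanSpace ℝ (Fin q))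
    (hg : ‖g y‖ ≤ L) (hghat : ‖ghat y‖ ≤ L)
    (lam' yplus yhatplus lamplus lamhatplus uplus uhatplus :
      EuclideanSpace ℝ (Fin q))
    (hlam' : lam' = lam + β • (x - y))
    (hyplus : yplus = y - α • (g y - lam'))
    (hyhatplus : yhatplus = y - α • (ghat y - lam'))
    (hlamplus : lamplus = lam' + β • ((xplus - x) - (yplus - y)))
    (hlamhatplus : lamhatplus = lam' + β • ((xplus - x) - (yhatplus - y)))
    (huplus : uplus = u + lamplus - lam)
    (huhatplus : uhatplus = u + lamhatplus - lam) :
    uplus - uhatplus = (α * β) • (g y - ghat y) ∧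
    ‖uplus - uhatplus‖ ≤ 2 * α * β * L ∧
    ‖uplus - uhatplus‖ ≤ 4 * α * β * L :=
  dp_recal_sensitivity_general q α β L hα hβ lam x y u xplus g ghat hg hghat lam' yplus yhatplus
    lamplus lamhatplus uplus uhatplus hyplus hyhatplus hlamplus hlamhatplus huplus huhatplus
end
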